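/- arXiv:1212.2666 — 4 statements merged into one kernel-verified Lean document; each statement's English description precedes it below -/
import Mathlib

section
/- (Newton's generalized binomial theorem.) For every real number a and every real number x with |x| < 1, the series ∑_{n=0}^∞ C(a,n)·x^n converges and its sum equals (1 + x)^a, where the power is the real power function. -/
/-- Newton's generalized binomial theorem: for |x| < 1 the binomial series
∑ C(a,n) xⁿ sums to (1+x)^a. -/
theorem newton_binomial_series (a x : ℝ) (hx : |x| < 1) :
    HasSum (fun n : ℕ => Ring.choose a n * x ^ n) ((1 + x) ^ a) := by
  have hball : x ∈ Metric.eball (0 : ℝ) 1 := by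
    simpa [← ofReal_norm] using hx
  simpa [binomialSeries, FormalMultilinearSeries.ofScalars_apply_eq, mul_comm] using
    (Real.one_add_rpow_hasFPowerSeriesOnBall_zero (a := a)).hasSum hball
end

section
/- (Newton's circle-squaring series.) Let R > 0 and 0 ≤ B ≤ R be real numbers. Then twice the area under the circular arc y = √(R² − x²) from 0 to B satisfies 2·∫_0^B √(R² − x²) dx = ∑_{n=0}^∞ (−1)^n·C(1/2,n)·2R²·(B/R)^{2n+1}/(2n+1), a convergent series whose first terms are 2RB − B³/(3R) − B⁵/(20R³) − B⁷/(56R⁵) − 5B⁹/(576R⁷) − ⋯ (obtained by integrating term by term the binomial expansion of √(R² − x²)). -/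
/-!
The binomial series `∑ C(1/2, n) yⁿ` converges absolutely on `|y| ≤ 1`: the recurrence
`(n + 2) |C(1/2, n+2)| = (n + 1/2) |C(1/2, n+1)|` makes the partial sums telescope,
`∑_{n<N} |C(1/2, n+1)| = 1 - 2 (N+1) |C(1/2, N+1)| ≤ 1`. Hence its sum is continuous on
`[-1, 1]`, and the identity `∑ C(1/2, n) yⁿ = √(1 + y)`, known on `(-1, 1)`, extends to the
endpoints. Putting `y = -u²` and integrating term by term (dominated by `|C(1/2, n)|`) expands
`∫₀ᵇ √(1 - u²) du` for `|b| ≤ 1`; the substitution `x = R u` gives the theorem.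
-/
open MeasureTheory Finset Set
open scoped Interval

theorem Ring.succ_mul_choose_succ {K : Type*} [Field K] [CharZero K] (r : K) (n : ℕ) :
    (n + 1 : K) * choose r (n + 1) = (r - n) * choose r n := by
  have h := descPochhammer_eq_factorial_smul_choose r (n + 1)
  rw [descPochhammer_succ_right, Polynomial.smeval_mul, descPochhammer_eq_factorial_smul_choose,
    Polynomial.smeval_sub, Polynomial.smeval_X, Polynomial.smeval_natCast] at h
  simp only [nsmul_eq_mul, Nat.factorial_succ, Nat.cast_mul, pow_one, pow_zero] at h
  apply mul_left_cancel₀ (Nat.cast_ne_zero.mpr n.factorial_ne_zero : (n.factorial : K) ≠ 0)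
  push_cast at h ⊢
  linear_combination -h

namespace Real

lemma succ_succ_mul_abs_choose_half (n : ℕ) :
    (n + 2 : ℝ) * |Ring.choose (1 / 2 : ℝ) (n + 2)| =
      (n + 1 / 2) * |Ring.choose (1 / 2 : ℝ) (n + 1)| := by
  have h := congrArg abs (Ring.succ_mul_choose_succ (1 / 2 : ℝ) (n + 1))
  push_cast at h
  rw [abs_mul, abs_mul, abs_of_nonneg (by positivity : (0 : ℝ) ≤ n + 1 + 1),
    abs_of_nonpos (by linarith : (1 / 2 : ℝ) - (n + 1) ≤ 0)] at h
  linear_combination h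

lemma sum_range_abs_choose_half_succ (N : ℕ) :
    ∑ n ∈ range N, |Ring.choose (1 / 2 : ℝ) (n + 1)| =
      1 - 2 * (N + 1) * |Ring.choose (1 / 2 : ℝ) (N + 1)| := by
  induction N with
  | zero => norm_num [Ring.choose_one_right]
  | succ N ih =>
    rw [sum_range_succ, ih]
    push_cast
    linear_combination 2 * succ_succ_mul_abs_choose_half N

lemma summable_abs_choose_half : Summable fun n => |Ring.choose (1 / 2 : ℝ) n| := by
  rw [← summable_nat_add_iff 1]
  refine summable_of_sum_range_le (c := 1) (fun _ => abs_nonneg _) fun N => ?_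
  rw [sum_range_abs_choose_half_succ]
  have : 0 ≤ 2 * ((N : ℝ) + 1) * |Ring.choose (1 / 2 : ℝ) (N + 1)| := by positivity
  linarith

lemma norm_choose_half_mul_pow_le {y : ℝ} (hy : |y| ≤ 1) (n : ℕ) :
    ‖Ring.choose (1 / 2 : ℝ) n * y ^ n‖ ≤ |Ring.choose (1 / 2 : ℝ) n| := by
  rw [norm_mul, norm_pow, norm_eq_abs, norm_eq_abs]
  exact mul_le_of_le_one_right (abs_nonneg _) (pow_le_one₀ (abs_nonneg _) hy)

lemma hasSum_choose_half_mul_pow_of_abs_lt {y : ℝ} (hy : |y| < 1) :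
    HasSum (fun n => Ring.choose (1 / 2 : ℝ) n * y ^ n) (√(1 + y)) := by
  have := one_add_rpow_hasFPowerSeriesOnBall_zero (a := 1 / 2) |>.hasSum
    (y := y) (by simpa [← ofReal_norm, Real.norm_eq_abs] using hy)
  simpa [sqrt_eq_rpow, binomialSeries, mul_comm] using this

lemma hasSum_choose_half_mul_pow {y : ℝ} (hy : |y| ≤ 1) :
    HasSum (fun n => Ring.choose (1 / 2 : ℝ) n * y ^ n) (√(1 + y)) := by
  have hsum : EqOn (fun y => ∑' n, Ring.choose (1 / 2 : ℝ) n * y ^ n) (fun y => √(1 + y))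
      (Icc (-1) 1) := by
    refine EqOn.of_subset_closure (s := Ioo (-1) 1)
      (fun y hy => (hasSum_choose_half_mul_pow_of_abs_lt (abs_lt.mpr hy)).tsum_eq)
      (continuousOn_tsum (fun n => by fun_prop) summable_abs_choose_half
        fun n y hy => norm_choose_half_mul_pow_le (abs_le.mpr hy) n)
      (by fun_prop) Ioo_subset_Icc_self (by rw [closure_Ioo (by norm_num)])
  rw [← show _ = √(1 + y) from hsum (abs_le.mp hy)]
  exact (summable_abs_choose_half.of_norm_bounded (norm_choose_half_mul_pow_le hy)).hasSum

lemma integral_neg_sq_pow (b : ℝ) (n : ℕ) :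
    ∫ u in (0 : ℝ)..b, (-u ^ 2) ^ n = (-1) ^ n * b ^ (2 * n + 1) / (2 * n + 1) := by
  have h : ∀ u : ℝ, (-u ^ 2) ^ n = (-1) ^ n * u ^ (2 * n) := fun u => by rw [neg_pow, pow_mul]
  simp_rw [h]
  rw [intervalIntegral.integral_const_mul, integral_pow]
  push_cast
  ring

lemma hasSum_integral_sqrt_one_sub_sq {b : ℝ} (hb : |b| ≤ 1) :
    HasSum (fun n : ℕ => (-1) ^ n * Ring.choose (1 / 2 : ℝ) n * b ^ (2 * n + 1) / (2 * n + 1))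
      (∫ u in (0 : ℝ)..b, √(1 - u ^ 2)) := by
  have hsq : ∀ u ∈ Ι (0 : ℝ) b, |-u ^ 2| ≤ 1 := fun u hu => by
    have := abs_sub_left_of_mem_uIcc (uIoc_subset_uIcc hu)
    rw [sub_zero, sub_zero] at this
    rw [abs_neg, abs_pow, sq_le_one_iff_abs_le_one, abs_abs]
    exact this.trans hb
  have h := intervalIntegral.hasSum_integral_of_dominated_convergence (μ := volume)
    (F := fun n u => Ring.choose (1 / 2 : ℝ) n * (-u ^ 2) ^ n) (f := fun u => √(1 + -u ^ 2))
    (fun n _ => |Ring.choose (1 / 2 : ℝ) n|)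
    (fun n => (by fun_prop : Continuous _).aestronglyMeasurable)
    (fun n => ae_of_all _ fun u hu => norm_choose_half_mul_pow_le (hsq u hu) n)
    (ae_of_all _ fun _ _ => summable_abs_choose_half) intervalIntegrable_const
    (ae_of_all _ fun u hu => hasSum_choose_half_mul_pow (hsq u hu))
  simp only [intervalIntegral.integral_const_mul, integral_neg_sq_pow, ← sub_eq_add_neg] at h
  exact h.congr_fun fun n => by ring

lemma integral_sqrt_sq_sub_sq {R : ℝ} (hR : 0 < R) (a b : ℝ) :
    ∫ x in a..b, √(R ^ 2 - x ^ 2) = R ^ 2 * ∫ u in a / R..b / R, √(1 - u ^ 2) := by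
  have h : ∀ x : ℝ, √(R ^ 2 - x ^ 2) = R * √(1 - (x / R) ^ 2) := fun x => by
    rw [← sqrt_sq hR.le, ← sqrt_mul (sq_nonneg R), sqrt_sq hR.le]
    congr 1
    field_simp
  simp_rw [h, intervalIntegral.integral_const_mul,
    intervalIntegral.integral_comp_div (fun u => √(1 - u ^ 2)) hR.ne', smul_eq_mul]
  ring

end Real

/-- Newton's circle-squaring series: twice the area under y = √(R² − x²) from
0 to B is the sum of the series obtained by term-by-term integration of the
binomial expansion of √(R² − x²). -/
theorem newton_circle_squaring_series (R B : ℝ) (hR : 0 < R) (hB0 : 0 ≤ B) (hBR : B ≤ R) :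
    HasSum
      (fun n : ℕ => (-1 : ℝ) ^ n * Ring.choose ((1 : ℝ) / 2) n *
        (2 * R ^ 2) * (B / R) ^ (2 * n + 1) / (2 * n + 1))
      (2 * ∫ x in (0 : ℝ)..B, Real.sqrt (R ^ 2 - x ^ 2)) := by
  have hBR' : |B / R| ≤ 1 := by
    rw [abs_le, le_div_iff₀ hR, div_le_one hR]
    constructor <;> linarith
  rw [Real.integral_sqrt_sq_sub_sq hR, zero_div, ← mul_assoc]
  exact ((Real.hasSum_integral_sqrt_one_sub_sq hBR').mul_left (2 * R ^ 2)).congr_fun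
    fun n => by ring
end

section
/- (Newton's circle-squaring series at B = R.) The series ∑_{n=0}^∞ 4·(−1)^n·C(1/2,n)/(2n+1) converges and its sum equals π: putting B = R in Newton's quadrature series gives the area of a semicircle, so that π = 4(1 − 1/6 − 1/40 − 1/112 − 5/1152 − ⋯). -/
/-!
Newton's argument: on `(-1, 1)` the binomial series gives
`√(1 - x²) = ∑ C(1/2, n) (-x²)ⁿ`, and integrating term by term over `[-1, 1]` turns the left side
into the area `π / 2` of the unit half-disc and the `n`-th term into `2 (-1)ⁿ C(1/2, n) / (2n + 1)`.
Term-by-term integration is legitimate because `|C(1/2, n)| ≤ 1 / (n + 1)`, which makes the series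
of the integrals of the absolute values converge.
-/

open Real MeasureTheory Set

theorem Ring.succ_nsmul_choose_succ {R : Type*} [NonAssocRing R] [Pow R ℕ] [BinomialRing R]
    [NatPowAssoc R] (r : R) (k : ℕ) :
    (k + 1) • Ring.choose r (k + 1) = Ring.choose r k * (r - k) := by
  simpa using Ring.choose_smul_choose r (Nat.le_succ k)

theorem abs_choose_half_le (n : ℕ) : |Ring.choose (1 / 2 : ℝ) n| ≤ 1 / (n + 1) := by
  induction n with
  | zero => simp
  | succ k ih =>
    set c := |Ring.choose (1 / 2 : ℝ) k|
    have hk : (0 : ℝ) < k + 1 := by positivity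
    have hrec : |Ring.choose (1 / 2 : ℝ) (k + 1)| * (k + 1) = c * |(1 / 2 : ℝ) - k| := by
      have h := Ring.succ_nsmul_choose_succ (1 / 2 : ℝ) k
      rw [nsmul_eq_mul, Nat.cast_succ] at h
      rw [← abs_of_pos hk, ← abs_mul, ← abs_mul, mul_comm, h]
    have hfactor : |(1 / 2 : ℝ) - k| * (k + 2) ≤ (k + 1) ^ 2 := by
      rcases Nat.eq_zero_or_pos k with rfl | hpos
      · norm_num
      · have : (1 : ℝ) ≤ k := by exact_mod_cast hpos
        rw [abs_of_nonpos (by linarith)]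
        nlinarith
    rw [le_div_iff₀ hk] at ih
    rw [le_div_iff₀ (by positivity), ← mul_le_mul_iff_of_pos_left hk]
    push_cast
    calc (k + 1) * (|Ring.choose (1 / 2 : ℝ) (k + 1)| * (k + 1 + 1))
        = c * (|(1 / 2 : ℝ) - k| * (k + 2)) := by linear_combination (k + 2 : ℝ) * hrec
      _ ≤ c * (k + 1) ^ 2 := by gcongr
      _ ≤ (k + 1) * 1 := by nlinarith

theorem summable_abs_choose_half_div :
    Summable fun n : ℕ => |Ring.choose (1 / 2 : ℝ) n| / (2 * n + 1) := by
  have hsq : Summable fun n : ℕ => 1 / ((n : ℝ) + 1) ^ 2 := by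
    simpa using (summable_nat_add_iff 1).mpr (Real.summable_one_div_nat_pow.mpr one_lt_two)
  refine hsq.of_nonneg_of_le (fun n => by positivity) fun n => ?_
  calc |Ring.choose (1 / 2 : ℝ) n| / (2 * n + 1) ≤ 1 / (n + 1) / (n + 1) := by
        gcongr
        · exact abs_choose_half_le n
        · linarith [(n.cast_nonneg : (0 : ℝ) ≤ n)]
    _ = 1 / ((n : ℝ) + 1) ^ 2 := by rw [div_div, sq]

theorem hasSum_choose_half_mul_pow {y : ℝ} (hy : |y| < 1) :
    HasSum (fun n => Ring.choose (1 / 2 : ℝ) n * y ^ n) (√(1 + y)) := by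
  have := (Real.one_add_rpow_hasFPowerSeriesOnBall_zero (a := 1 / 2)).hasSum
    (y := y) (by simpa [← ofReal_norm] using hy)
  simpa [Real.sqrt_eq_rpow, binomialSeries, FormalMultilinearSeries.coeff_ofScalars, mul_comm]
    using this

theorem integral_sq_pow (n : ℕ) : ∫ x in (-1 : ℝ)..1, (x ^ 2) ^ n = 2 / (2 * n + 1) := by
  simp_rw [← pow_mul, integral_pow]
  rw [Odd.neg_one_pow ⟨n, rfl⟩]
  push_cast
  ring

theorem hasSum_two_mul_choose_half_div :
    HasSum (fun n : ℕ => 2 * (-1) ^ n * Ring.choose (1 / 2 : ℝ) n / (2 * n + 1)) (π / 2) := by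
  set F : ℕ → ℝ → ℝ := fun n x => Ring.choose (1 / 2 : ℝ) n * (-x ^ 2) ^ n
  have hintegral (n : ℕ) : ∫ x in Ioc (-1 : ℝ) 1, F n x
      = 2 * (-1) ^ n * Ring.choose (1 / 2 : ℝ) n / (2 * n + 1) := by
    simp_rw [F, ← intervalIntegral.integral_of_le (by norm_num : (-1 : ℝ) ≤ 1), neg_pow (_ ^ 2),
      ← mul_assoc, intervalIntegral.integral_const_mul, integral_sq_pow]
    ring
  have hintegral_norm (n : ℕ) : ∫ x in Ioc (-1 : ℝ) 1, ‖F n x‖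
      = 2 * (|Ring.choose (1 / 2 : ℝ) n| / (2 * n + 1)) := by
    simp_rw [F, norm_mul, norm_pow, norm_neg, Real.norm_eq_abs, abs_sq,
      ← intervalIntegral.integral_of_le (by norm_num : (-1 : ℝ) ≤ 1),
      intervalIntegral.integral_const_mul, integral_sq_pow]
    ring
  have hsum_sqrt : ∀ᵐ x ∂volume.restrict (Ioc (-1 : ℝ) 1), ∑' n, F n x = √(1 - x ^ 2) := by
    rw [← Measure.restrict_congr_set Ioo_ae_eq_Ioc]
    filter_upwards [ae_restrict_mem measurableSet_Ioo] with x hx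
    have hx2 : |-x ^ 2| < 1 := by
      rw [abs_neg, abs_sq]
      nlinarith [hx.1, hx.2]
    exact (hasSum_choose_half_mul_pow hx2).tsum_eq
  have key := hasSum_integral_of_summable_integral_norm (μ := volume.restrict (Ioc (-1 : ℝ) 1))
    (fun n => (by fun_prop : Continuous (F n)).integrableOn_Ioc)
    (by simpa only [hintegral_norm] using summable_abs_choose_half_div.mul_left 2)
  rw [integral_congr_ae hsum_sqrt, ← intervalIntegral.integral_of_le (by norm_num),
    integral_sqrt_one_sub_sq] at key
  simpa only [hintegral] using key

/-- Newton's circle-squaring series at B = R: π = 4(1 − 1/6 − 1/40 − 1/112 − ⋯). -/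
theorem newton_circle_squaring_pi :
    HasSum (fun n : ℕ => 4 * (-1 : ℝ) ^ n * Ring.choose ((1 : ℝ) / 2) n / (2 * n + 1)) π := by
  have h := hasSum_two_mul_choose_half_div.mul_left 2
  rw [mul_div_cancel₀ π two_ne_zero] at h
  exact h.congr_fun fun n => by ring
end

section
/- (Leibniz's 1684 rule for points of inflection.) Let f : ℝ → ℝ be differentiable, let x₀ be a real number and δ > 0, and suppose the derivative of f is differentiable at x₀. If f is convex on the interval (x₀ − δ, x₀] and concave on the interval [x₀, x₀ + δ) (so that the curve turns from convex to concave at x₀), then the second derivative of f vanishes at x₀: f''(x₀) = 0. -/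
/-- Leibniz's 1684 rule for points of inflection: if a differentiable curve is
convex on (x₀ − δ, x₀] and concave on [x₀, x₀ + δ), and its derivative is
differentiable at x₀, then the second derivative vanishes at x₀. -/
theorem leibniz_inflection_rule (f : ℝ → ℝ) (hf : Differentiable ℝ f)
    (x₀ δ : ℝ) (hδ : 0 < δ)
    (hf' : DifferentiableAt ℝ (deriv f) x₀)
    (hconv : ConvexOn ℝ (Set.Ioc (x₀ - δ) x₀) f)
    (hconc : ConcaveOn ℝ (Set.Ico x₀ (x₀ + δ)) f) :
    deriv (deriv f) x₀ = 0 := by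
  have hmono : MonotoneOn (deriv f) (Set.Ioc (x₀ - δ) x₀) :=
    hconv.monotoneOn_deriv fun x _ => hf x
  have hanti : AntitoneOn (deriv f) (Set.Ico x₀ (x₀ + δ)) :=
    hconc.antitoneOn_deriv fun x _ => hf x
  have hmax : IsLocalMax (deriv f) x₀ := by
    filter_upwards [Ioo_mem_nhds (by linarith : x₀ - δ < x₀) (by linarith : x₀ < x₀ + δ)]
      with x hx
    rcases le_or_gt x x₀ with h | h
    · exact hmono ⟨hx.1, h⟩ ⟨by linarith, le_refl _⟩ h
    · exact hanti ⟨le_refl _, by linarith⟩ ⟨h.le, hx.2⟩ h.le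
  exact hmax.deriv_eq_zero
end
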